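/- Let M be a finite labeled transition system over label set S, let f₁,…,f_d be DFAs over S, and for each i let ξ_i and v_i be the recurrence matrix and initial condition vector of the synchronous product M‖f_i. Let d' ∈ ℕ, let @ be a function from multisets over ℕ^d to ℚ^{d'}, let h : ℕ^d → ℚ^{d'}, and let Ψ be a predicate on multisets over ℕ^d. Assume: (i) for every multiset X over ℕ^d, if Ψ(X) holds then @(X) = h(Σ₁X,…,Σ_dX); and (ii) for every n ≥ 0, Ψ holds of the multiset img_f(M,n) over ℕ^d in which the tuple (f₁(w),…,f_d(w)) occurs with multiplicity mult_M(w) for each word w of length n. Then for every n ≥ 0, @(img_f(M,n)) = h((ξ₁^{n+1}v₁)₀,…,(ξ_d^{n+1}v_d)₀), where (u)₀ denotes the first entry of a vector; consequently, for any L ∈ ℝ^{d'}, the sequence n ↦ @(img_f(M,n)) tends to L as n → ∞ if and only if the sequence n ↦ h((ξ₁^{n+1}v₁)₀,…,(ξ_d^{n+1}v_d)₀) tends to L. -/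

import Mathlib

open scoped Classical

/-- A finite labeled transition system: a set of initial states and a transition relation. -/
structure LTS (Q S : Type*) where
  init : Set Q
  trans : Set (Q × S × Q)

/-- A deterministic finite automaton over labels `S` with states `R`. -/
structure DFAc (S R : Type*) where
  start : R
  accept : Set R
  step : R → S → R

variable {Q S : Type*} [Fintype Q] [Fintype S]

/-- The finite set of paths of length `n` of an LTS. -/
noncomputable def pathFinset (M : LTS Q S) (n : ℕ) :
    Finset ((Fin (n + 1) → Q) × (Fin n → S)) :=
  Finset.univ.filter (fun p =>
    p.1 0 ∈ M.init ∧ ∀ i : Fin n, (p.1 i.castSucc, p.2 i, p.1 i.succ) ∈ M.trans)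

/-- `alpha M Acc n q`: total accepting-state visits over paths of length `n` ending in `q`. -/
noncomputable def alpha (M : LTS Q S) (Acc : Set Q) (n : ℕ) (q : Q) : ℕ :=
  ∑ p ∈ (pathFinset M n).filter (fun p => p.1 (Fin.last n) = q),
    (Finset.univ.filter (fun i : Fin (n + 1) => p.1 i ∈ Acc)).card

/-- The predecessor matrix of an LTS. -/
noncomputable def predMatrix (M : LTS Q S) : Matrix Q Q ℕ :=
  fun i j => (Finset.univ.filter (fun a : S => (j, a, i) ∈ M.trans)).card

/-- The accepting matrix of an LTS with accepting set `Acc`. -/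
noncomputable def accMatrix (M : LTS Q S) (Acc : Set Q) : Matrix Q Q ℕ :=
  fun i j => if i ∈ Acc then predMatrix M i j else 0

/-- The recurrence matrix `ξ = [[0, 1ᵀ, 0ᵀ], [0, D, A], [0, 0, D]]`, indexed by
`Unit ⊕ Q ⊕ Q`. -/
noncomputable def xi (M : LTS Q S) (Acc : Set Q) :
    Matrix (Unit ⊕ Q ⊕ Q) (Unit ⊕ Q ⊕ Q) ℕ := fun i j =>
  match i, j with
  | Sum.inl _, Sum.inr (Sum.inl _) => 1
  | Sum.inr (Sum.inl i'), Sum.inr (Sum.inl j') => predMatrix M i' j'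
  | Sum.inr (Sum.inl i'), Sum.inr (Sum.inr j') => accMatrix M Acc i' j'
  | Sum.inr (Sum.inr i'), Sum.inr (Sum.inr j') => predMatrix M i' j'
  | _, _ => 0

/-- The initial condition vector `v = (0, α⃗₀, β⃗₀)`. -/
noncomputable def initVec (M : LTS Q S) (Acc : Set Q) : (Unit ⊕ Q ⊕ Q) → ℕ :=
  Sum.elim (fun _ => 0)
    (Sum.elim (fun q => if q ∈ M.init ∧ q ∈ Acc then 1 else 0)
      (fun q => if q ∈ M.init then 1 else 0))

/-- `mult M n w`: the multiplicity of the word `w` of length `n` in `M`. -/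
noncomputable def mult (M : LTS Q S) (n : ℕ) (w : Fin n → S) : ℕ :=
  (Finset.univ.filter (fun qh : Fin (n + 1) → Q =>
    qh 0 ∈ M.init ∧ ∀ i : Fin n, (qh i.castSucc, w i, qh i.succ) ∈ M.trans)).card

/-- The state visited by the DFA `f` after consuming the first `i` letters of `w`. -/
def dfaState {S R : Type*} (f : DFAc S R) {n : ℕ} (w : Fin n → S) (i : Fin (n + 1)) : R :=
  ((List.ofFn w).take i.val).foldl f.step f.start

/-- `dfaCount f w` = number of accepting states visited by `f` while consuming `w`. -/
noncomputable def dfaCount {S R : Type*} (f : DFAc S R) {n : ℕ} (w : Fin n → S) : ℕ :=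
  (Finset.univ.filter (fun i : Fin (n + 1) => dfaState f w i ∈ f.accept)).card

/-- The synchronous product `M ‖ f` of an LTS and a DFA. -/
def prodLTS {Q S R : Type*} (M : LTS Q S) (f : DFAc S R) : LTS (Q × R) S where
  init := {qr | qr.1 ∈ M.init ∧ qr.2 = f.start}
  trans := {t | (t.1.1, t.2.1, t.2.2.1) ∈ M.trans ∧ f.step t.1.2 t.2.1 = t.2.2.2}

/-- `imgF M fs n` is the multiset over `ℕ^d` in which the tuple `(f₁(w), …, f_d(w))`
occurs with multiplicity `mult_M(w)`, for each word `w` of length `n`. -/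
noncomputable def imgF {d : ℕ} {R : Fin d → Type*} (M : LTS Q S)
    (fs : ∀ i, DFAc S (R i)) (n : ℕ) : Multiset (Fin d → ℕ) :=
  ∑ w : Fin n → S, Multiset.replicate (mult M n w) (fun i => dfaCount (fs i) w)


/-! By hypothesis `@(img_f(M,n)) = h(Σ₁ img_f(M,n), …)`, so it suffices that
`Σ_i img_f(M,n) = (ξ_i^{n+1} v_i)₀`. Since a DFA is deterministic, a path of `M` with word `w`
lifts uniquely to a path of `M ‖ f` (run `f` alongside), so `Σ_w mult_M(w) f(w)` counts pairs
(path of `M ‖ f` of length `n`, index at which it is accepting); grouping by the last state gives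
`Σ_q α_n(q)`. Splitting off the last step of a path yields `α_{n+1} = D α_n + A β_n` and
`β_{n+1} = D β_n`, with `β_n(q)` the number of paths ending in `q`; `ξ` is the matrix of this
recurrence with an extra top row summing `α`, so `(ξ^{n+1} v)₀ = Σ_q α_n(q)`. -/

theorem card_filter_snoc_mem {α : Type*} (s : Set α) {n : ℕ} (x : Fin (n + 1) → α) (a : α) :
    (Finset.univ.filter (fun i => (Fin.snoc x a : Fin (n + 2) → α) i ∈ s)).card =
      (Finset.univ.filter (fun i => x i ∈ s)).card + if a ∈ s then 1 else 0 := by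
  rw [Finset.card_filter, Finset.card_filter, Fin.sum_univ_castSucc]
  simp

namespace LTS

variable (M : LTS Q S) (Acc : Set Q)

noncomputable def beta (n : ℕ) (q : Q) : ℕ :=
  ((pathFinset M n).filter (fun p => p.1 (Fin.last n) = q)).card

theorem mem_pathFinset_snoc {n : ℕ} (qh : Fin (n + 1) → Q) (w : Fin n → S) (q : Q) (a : S) :
    ((Fin.snoc qh q : Fin (n + 2) → Q), (Fin.snoc w a : Fin (n + 1) → S)) ∈
        pathFinset M (n + 1) ↔
      (qh, w) ∈ pathFinset M n ∧ (qh (Fin.last n), a, q) ∈ M.trans := by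
  simp only [pathFinset, Finset.mem_filter, Finset.mem_univ, true_and, Fin.forall_fin_succ',
    Fin.snoc_castSucc, Fin.snoc_last, Fin.succ_castSucc, ← Fin.castSucc_zero, Fin.succ_last]
  tauto

theorem sum_pathFinset_succ (n : ℕ) (F : (Fin (n + 2) → Q) × (Fin (n + 1) → S) → ℕ) :
    ∑ p ∈ pathFinset M (n + 1), F p =
      ∑ p ∈ pathFinset M n, ∑ q : Q,
        ∑ a ∈ Finset.univ.filter (fun a => (p.1 (Fin.last n), a, q) ∈ M.trans),
          F (Fin.snoc p.1 q, Fin.snoc p.2 a) := by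
  have hsplit : ∑ p ∈ pathFinset M (n + 1), F p =
      ∑ x ∈ (pathFinset M n ×ˢ (Finset.univ : Finset (Q × S))).filter
          (fun x => (x.1.1 (Fin.last n), x.2.2, x.2.1) ∈ M.trans),
        F (Fin.snoc x.1.1 x.2.1, Fin.snoc x.1.2 x.2.2) := by
    refine Finset.sum_nbij'
      (fun p => ((Fin.init p.1, Fin.init p.2), p.1 (Fin.last _), p.2 (Fin.last _)))
      (fun x => (Fin.snoc x.1.1 x.2.1, Fin.snoc x.1.2 x.2.2)) ?_ ?_ ?_ ?_ ?_
    · rintro ⟨qh, w⟩ hp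
      have h := mem_pathFinset_snoc M (Fin.init qh) (Fin.init w) (qh (Fin.last _)) (w (Fin.last _))
      rw [Fin.snoc_init_self, Fin.snoc_init_self] at h
      simpa using h.1 hp
    · rintro ⟨⟨qh, w⟩, q, a⟩ hx
      simpa [mem_pathFinset_snoc] using hx
    all_goals intro _ _; simp
  rw [hsplit, Finset.sum_filter, Finset.sum_product]
  refine Finset.sum_congr rfl fun p _ => ?_
  rw [Fintype.sum_prod_type]
  simp only [Finset.sum_filter]

theorem sum_filter_last_pathFinset_zero (F : (Fin 1 → Q) × (Fin 0 → S) → ℕ) (q : Q) :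
    ∑ p ∈ (pathFinset M 0).filter (fun p => p.1 (Fin.last 0) = q), F p =
      if q ∈ M.init then F (fun _ => q, Fin.elim0) else 0 := by
  have hfilter : (pathFinset M 0).filter (fun p => p.1 (Fin.last 0) = q) =
      if q ∈ M.init then {(fun _ => q, Fin.elim0)} else ∅ := by
    ext ⟨qh, w⟩
    rw [Subsingleton.elim w Fin.elim0]
    split_ifs <;> simp [pathFinset, funext_iff, Fin.forall_fin_one] <;> grind
  rw [hfilter]
  split_ifs <;> simp

theorem sum_filter_last_pathFinset_succ {n : ℕ}
    (F : (Fin (n + 2) → Q) × (Fin (n + 1) → S) → ℕ) (q : Q) :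
    ∑ p ∈ (pathFinset M (n + 1)).filter (fun p => p.1 (Fin.last (n + 1)) = q), F p =
      ∑ p ∈ pathFinset M n,
        ∑ a ∈ Finset.univ.filter (fun a => (p.1 (Fin.last n), a, q) ∈ M.trans),
          F (Fin.snoc p.1 q, Fin.snoc p.2 a) := by
  rw [Finset.sum_filter, sum_pathFinset_succ]
  refine Finset.sum_congr rfl fun p _ => ?_
  simp only [Fin.snoc_last, Finset.sum_ite_irrel, Finset.sum_const_zero, Finset.sum_ite_eq',
    Finset.mem_univ, if_true]

theorem sum_pathFinset_mul_last (n : ℕ) (G : Q → ℕ)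
    (H : (Fin (n + 1) → Q) × (Fin n → S) → ℕ) :
    ∑ p ∈ pathFinset M n, G (p.1 (Fin.last n)) * H p =
      ∑ q : Q, G q * ∑ p ∈ (pathFinset M n).filter (fun p => p.1 (Fin.last n) = q), H p := by
  rw [← Finset.sum_fiberwise (pathFinset M n) (fun p => p.1 (Fin.last n))]
  refine Finset.sum_congr rfl fun q _ => ?_
  rw [Finset.mul_sum]
  exact Finset.sum_congr rfl fun p hp => by rw [(Finset.mem_filter.1 hp).2]

theorem beta_zero (q : Q) : M.beta 0 q = if q ∈ M.init then 1 else 0 := by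
  rw [beta, Finset.card_eq_sum_ones, sum_filter_last_pathFinset_zero]

theorem alpha_zero (q : Q) : alpha M Acc 0 q = if q ∈ M.init ∧ q ∈ Acc then 1 else 0 := by
  rw [alpha, sum_filter_last_pathFinset_zero]
  by_cases hq : q ∈ Acc <;> simp [hq, Finset.filter_true_of_mem, Finset.filter_false_of_mem]

theorem beta_succ (n : ℕ) (q : Q) :
    M.beta (n + 1) q = ∑ q', predMatrix M q q' * M.beta n q' := by
  have h := sum_pathFinset_mul_last M n (predMatrix M q) (fun _ => 1)
  simp only [mul_one, ← Finset.card_eq_sum_ones] at h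
  rw [beta, Finset.card_eq_sum_ones, sum_filter_last_pathFinset_succ]
  simp only [← Finset.card_eq_sum_ones]
  exact h

theorem alpha_succ (n : ℕ) (q : Q) :
    alpha M Acc (n + 1) q =
      ∑ q', predMatrix M q q' * alpha M Acc n q' +
        ∑ q', accMatrix M Acc q q' * M.beta n q' := by
  have h := sum_pathFinset_mul_last M n (predMatrix M q)
    (fun p => (Finset.univ.filter (fun i => p.1 i ∈ Acc)).card + if q ∈ Acc then 1 else 0)
  rw [alpha, sum_filter_last_pathFinset_succ]
  simp only [card_filter_snoc_mem, Finset.sum_const, smul_eq_mul]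
  refine h.trans ?_
  simp only [Finset.sum_add_distrib, mul_add, Finset.sum_const, smul_eq_mul]
  congr 1
  refine Finset.sum_congr rfl fun q' _ => ?_
  by_cases hq : q ∈ Acc <;> simp [accMatrix, beta, hq]

theorem sum_alpha (n : ℕ) :
    ∑ q, alpha M Acc n q =
      ∑ p ∈ pathFinset M n, (Finset.univ.filter (fun i => p.1 i ∈ Acc)).card :=
  Finset.sum_fiberwise _ _ _

theorem sum_pathFinset_eq_sum_mult (n : ℕ) (g : (Fin n → S) → ℕ) :
    ∑ p ∈ pathFinset M n, g p.2 = ∑ w, mult M n w * g w := by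
  rw [pathFinset, Finset.sum_filter, Fintype.sum_prod_type, Finset.sum_comm]
  refine Finset.sum_congr rfl fun w _ => ?_
  rw [mult, Finset.card_eq_sum_ones, Finset.sum_mul, one_mul, Finset.sum_filter]

theorem xi_mulVec (u : Unit ⊕ Q ⊕ Q → ℕ) :
    (xi M Acc).mulVec u =
      Sum.elim (fun _ => ∑ q, u (Sum.inr (Sum.inl q)))
        (Sum.elim
          (fun q => ∑ q', predMatrix M q q' * u (Sum.inr (Sum.inl q')) +
            ∑ q', accMatrix M Acc q q' * u (Sum.inr (Sum.inr q')))
          (fun q => ∑ q', predMatrix M q q' * u (Sum.inr (Sum.inr q')))) := by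
  funext i
  rcases i with _ | q | q <;> simp [Matrix.mulVec, dotProduct, Fintype.sum_sum_type, xi]

-- `DecidableEq Q` is a binder rather than `Classical`, so that this applies to matrix powers
-- built with any instance.
theorem xi_pow_mulVec_initVec [DecidableEq Q] (n : ℕ) :
    (xi M Acc ^ (n + 1)).mulVec (initVec M Acc) =
      Sum.elim (fun _ => ∑ q, alpha M Acc n q)
        (Sum.elim (alpha M Acc (n + 1)) (M.beta (n + 1))) := by
  induction n with
  | zero =>
    rw [zero_add, pow_one, xi_mulVec]
    funext i
    rcases i with _ | q | q <;> simp [initVec, alpha_zero, beta_zero, alpha_succ, beta_succ]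
  | succ n ih =>
    rw [pow_succ', ← Matrix.mulVec_mulVec, ih, xi_mulVec]
    funext i
    rcases i with _ | q | q <;> simp [alpha_succ, beta_succ]

theorem xi_pow_succ_mulVec_initVec_inl [DecidableEq Q] (n : ℕ) :
    (xi M Acc ^ (n + 1)).mulVec (initVec M Acc) (Sum.inl ()) = ∑ q, alpha M Acc n q := by
  rw [xi_pow_mulVec_initVec, Sum.elim_inl]

end LTS

theorem dfaState_zero {S R : Type*} (f : DFAc S R) {n : ℕ} (w : Fin n → S) :
    dfaState f w 0 = f.start := by
  simp [dfaState]

theorem dfaState_succ {S R : Type*} (f : DFAc S R) {n : ℕ} (w : Fin n → S) (i : Fin n) :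
    dfaState f w i.succ = f.step (dfaState f w i.castSucc) (w i) := by
  simp [dfaState, List.take_add_one, List.foldl_append]

theorem pathFinset_prodLTS {R : Type*} [Fintype R] (M : LTS Q S) (f : DFAc S R) (n : ℕ) :
    pathFinset (prodLTS M f) n = (pathFinset M n).map
      ⟨fun p => (fun i => (p.1 i, dfaState f p.2 i), p.2), fun p p' h => by
        simp only [Prod.mk.injEq, funext_iff] at h
        exact Prod.ext (funext fun i => (h.1 i).1) (funext h.2)⟩ := by
  ext ⟨qrh, w⟩
  simp only [pathFinset, Finset.mem_map, Finset.mem_filter, Finset.mem_univ, true_and, Prod.exists]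
  simp only [prodLTS, Set.mem_ofPred_eq]
  constructor
  · rintro ⟨⟨hinit, hstart⟩, htrans⟩
    have hrun : ∀ i, (qrh i).2 = dfaState f w i := by
      intro i
      induction i using Fin.induction with
      | zero => rw [dfaState_zero, hstart]
      | succ i ih => rw [dfaState_succ, ← ih, (htrans i).2]
    exact ⟨fun i => (qrh i).1, w, ⟨hinit, fun i => (htrans i).1⟩,
      Prod.ext (funext fun i => Prod.ext rfl (hrun i).symm) rfl⟩
  · rintro ⟨qh, w', ⟨hinit, htrans⟩, h⟩
    obtain ⟨rfl, rfl⟩ := Prod.ext_iff.1 h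
    exact ⟨⟨hinit, dfaState_zero f w'⟩,
      fun i => ⟨htrans i, (dfaState_succ f w' i).symm⟩⟩

theorem sum_alpha_prodLTS {R : Type*} [Fintype R] (M : LTS Q S) (f : DFAc S R) (n : ℕ) :
    ∑ q, alpha (prodLTS M f) {qr | qr.2 ∈ f.accept} n q = ∑ w, mult M n w * dfaCount f w := by
  rw [LTS.sum_alpha, pathFinset_prodLTS, Finset.sum_map]
  exact LTS.sum_pathFinset_eq_sum_mult M n (dfaCount f)

theorem sum_map_eval_imgF {d : ℕ} {R : Fin d → Type*} (M : LTS Q S) (fs : ∀ i, DFAc S (R i))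
    (n : ℕ) (i : Fin d) :
    ((imgF M fs n).map (fun t => t i)).sum = ∑ w, mult M n w * dfaCount (fs i) w := by
  have h := map_sum
    (Multiset.sumAddMonoidHom.comp (Multiset.mapAddMonoidHom fun t : Fin d → ℕ => t i))
    (fun w => Multiset.replicate (mult M n w) (fun i => dfaCount (fs i) w)) Finset.univ
  exact h.trans (by simp [Multiset.map_replicate, Multiset.sum_replicate])

open Filter in
/-- Reduction of fitness evaluation to matrix analysis: if `h` conditionally represents
the aggregate `agg` subject to `Ψ`, and `Ψ` holds of every image multiset `img_f(M, n)`,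
then `agg (img_f(M,n)) = h((ξ₁^{n+1}v₁)₀, …, (ξ_d^{n+1}v_d)₀)` for every `n`; consequently
the two real sequences have the same limits. -/
theorem stmt_8 {d d' : ℕ} {R : Fin d → Type*} [∀ i, Fintype (R i)] [DecidableEq Q]
    (M : LTS Q S) (fs : ∀ i, DFAc S (R i))
    (agg : Multiset (Fin d → ℕ) → Fin d' → ℚ)
    (h : (Fin d → ℕ) → Fin d' → ℚ)
    (Ψ : Multiset (Fin d → ℕ) → Prop)
    (hrep : ∀ X, Ψ X → agg X = h (fun i => (X.map (fun t => t i)).sum))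
    (hΨ : ∀ n : ℕ, Ψ (imgF M fs n)) :
    (∀ n : ℕ, agg (imgF M fs n) =
        h (fun i =>
          (xi (prodLTS M (fs i)) {qr | qr.2 ∈ (fs i).accept} ^ (n + 1)).mulVec
            (initVec (prodLTS M (fs i)) {qr | qr.2 ∈ (fs i).accept}) (Sum.inl ()))) ∧
    (∀ L : Fin d' → ℝ,
      Tendsto (fun n : ℕ => fun j : Fin d' => ((agg (imgF M fs n) j : ℚ) : ℝ))
          atTop (nhds L) ↔
      Tendsto (fun n : ℕ => fun j : Fin d' =>
          ((h (fun i =>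
              (xi (prodLTS M (fs i)) {qr | qr.2 ∈ (fs i).accept} ^ (n + 1)).mulVec
                (initVec (prodLTS M (fs i)) {qr | qr.2 ∈ (fs i).accept})
                (Sum.inl ())) j : ℚ) : ℝ))
          atTop (nhds L)) := by
  have hagg (n : ℕ) := hrep _ (hΨ n)
  simp only [hagg, sum_map_eval_imgF, LTS.xi_pow_succ_mulVec_initVec_inl, sum_alpha_prodLTS,
    implies_true, iff_self, and_self]
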